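/- Let n be a positive integer and let D′ be a finite digraph that is the union of strongly connected subdigraphs H₁, …, H_m with m ≥ 2n + 1, such that any two of the subdigraphs H_i, H_j share at least one vertex and every vertex of D′ belongs to at most two of the subdigraphs H₁, …, H_m. Then D′ has a haven of order n + 1. -/

import Mathlib

/-- A directed path in the digraph with adjacency relation `A`: a nonempty list of
distinct vertices in which each consecutive pair is joined by an edge directed forwards. -/
def IsDipath {V : Type*} (A : V → V → Prop) (l : List V) : Prop :=
  l ≠ [] ∧ l.Nodup ∧ l.Chain' A

/-- A directed path all of whose vertices lie in the set `S`. -/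
def DipathIn {V : Type*} (A : V → V → Prop) (S : Set V) (l : List V) : Prop :=
  IsDipath A l ∧ ∀ v ∈ l, v ∈ S

/-- A directed path from `u` to `v`. -/
def DipathFromTo {V : Type*} (A : V → V → Prop) (l : List V) (u v : V) : Prop :=
  IsDipath A l ∧ l.head? = some u ∧ l.getLast? = some v

/-- The digraph with adjacency `A` is strongly connected on the vertex set `S`:
any vertex of `S` can reach any other by a directed path staying inside `S`. -/
def StrongOn {V : Type*} (A : V → V → Prop) (S : Set V) : Prop :=
  ∀ u ∈ S, ∀ v ∈ S, ∃ l : List V, DipathIn A S l ∧ l.head? = some u ∧ l.getLast? = some v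

/-- `C` is (the vertex set of) a strong component of the subdigraph induced on `W`:
a maximal nonempty strongly connected subset of `W`. -/
def IsStrongComponent {V : Type*} (A : V → V → Prop) (W C : Set V) : Prop :=
  C ⊆ W ∧ C.Nonempty ∧ StrongOn A C ∧
    ∀ C' : Set V, C ⊆ C' → C' ⊆ W → StrongOn A C' → C' = C

/-- `B` is a haven of order `w` in the digraph with adjacency `A` and vertex set `S`:
for every `Z ⊆ S` with `|Z| < w`, `B Z` is a strong component of the digraph minus `Z`,
and `B Z ⊆ B Z'` whenever `Z' ⊆ Z` (the haven axiom). -/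
def IsHavenOn {V : Type*} (A : V → V → Prop) (S : Set V) (w : ℕ) (B : Finset V → Set V) : Prop :=
  ∀ Z : Finset V, ↑Z ⊆ S → Z.card < w →
    IsStrongComponent A (S \ ↑Z) (B Z) ∧ ∀ Z' : Finset V, Z' ⊆ Z → B Z ⊆ B Z'

/-- The digraph with adjacency `A` and vertex set `S` has a haven of order `w`. -/
def HasHavenOn {V : Type*} (A : V → V → Prop) (S : Set V) (w : ℕ) : Prop :=
  ∃ B : Finset V → Set V, IsHavenOn A S w B

/-- The digraph with adjacency `A` (on its whole vertex type) has a haven of order `w`. -/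
def HasHaven {V : Type*} (A : V → V → Prop) (w : ℕ) : Prop :=
  HasHavenOn A Set.univ w

/-- A linkage from the finite set `S` to the finite set `T`: for each `a ∈ S`,
`P a` is a directed path from `a` to `τ a ∈ T`, and the paths are pairwise vertex-disjoint
(so the ends `τ a` are distinct vertices of `T`). -/
def IsLinkage {V : Type*} (A : V → V → Prop) (S T : Finset V)
    (P : V → List V) (τ : V → V) : Prop :=
  (∀ a ∈ S, τ a ∈ T ∧ DipathFromTo A (P a) a (τ a)) ∧
  ∀ a₁ ∈ S, ∀ a₂ ∈ S, a₁ ≠ a₂ → ∀ v ∈ P a₁, v ∉ P a₂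

/-- `X` is linked: for every `S, T ⊆ X` with `|S| = |T|` there is a linkage of `|S|`
pairwise vertex-disjoint directed paths from `S` to `T`. -/
def Linked {V : Type*} (A : V → V → Prop) (X : Finset V) : Prop :=
  ∀ S T : Finset V, S ⊆ X → T ⊆ X → S.card = T.card →
    ∃ (P : V → List V) (τ : V → V), IsLinkage A S T P τ

/-- `(S, A')` is a subdigraph of the digraph with adjacency `A`: every edge of `A'`
is an edge of `A` with both ends in `S`. -/
def IsSubdigraph {V : Type*} (A : V → V → Prop) (S : Set V) (A' : V → V → Prop) : Prop :=
  ∀ u v, A' u v → A u v ∧ u ∈ S ∧ v ∈ S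

/-- The digraph with adjacency `A` and vertex set `S` is `k`-eulerianizable: it is strongly
connected and one can assign a positive multiplicity to each edge so that at every vertex the
total multiplicity of in-edges equals that of the out-edges and both are at most `k`. -/
def Eulerianizable {V : Type*} [Fintype V] (A : V → V → Prop) (S : Set V) (k : ℕ) : Prop :=
  StrongOn A S ∧ ∃ m : V → V → ℕ,
    (∀ u v, A u v → 1 ≤ m u v) ∧ (∀ u v, ¬ A u v → m u v = 0) ∧
    ∀ v ∈ S, (∑ u, m u v) = (∑ u, m v u) ∧ (∑ u, m v u) ≤ k

/-!
Every member `T i` of the family is strongly connected and any two members meet, so all vertices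
lying in members that avoid a set `Z` are in one strong component of the digraph minus `Z`; let
the haven send `Z` to that component. It is nonempty as long as some member avoids `Z`, and this
is where counting enters: a vertex lies in at most two members, so at most `2 |Z| ≤ 2n < m`
members meet `Z`. Shrinking `Z` only adds avoiding members, which gives the haven axiom.
-/

section Reachability

variable {V : Type*} {A : V → V → Prop} {S W : Set V} {u v w : V}

def ReachIn (A : V → V → Prop) (S : Set V) : V → V → Prop :=
  Relation.ReflTransGen fun x y => A x y ∧ x ∈ S ∧ y ∈ S

theorem ReachIn.mono (hSW : S ⊆ W) (h : ReachIn A S u v) : ReachIn A W u v :=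
  Relation.ReflTransGen.mono (p := fun x y => A x y ∧ x ∈ W ∧ y ∈ W)
    (fun _ _ hxy => ⟨hxy.1, hSW hxy.2.1, hSW hxy.2.2⟩) _ _ h

theorem reachIn_of_isChain {l : List V} (hl : l.IsChain A) (hlS : ∀ x ∈ l, x ∈ S)
    (hu : l.head? = some u) (hv : l.getLast? = some v) : ReachIn A S u v := by
  have hchain : l.IsChain fun x y => A x y ∧ x ∈ S ∧ y ∈ S :=
    hl.imp_of_mem_imp fun x y hx hy hxy => ⟨hxy, hlS x hx, hlS y hy⟩
  cases l with
  | nil => simp at hu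
  | cons a t =>
    obtain rfl : a = u := by simpa using hu
    refine List.relationReflTransGen_of_exists_isChain_cons t hchain ?_
    simpa [List.getLast?_eq_some_getLast] using hv

theorem DipathIn.reachIn {l : List V} (h : DipathIn A S l) (hu : l.head? = some u)
    (hv : l.getLast? = some v) : ReachIn A S u v :=
  reachIn_of_isChain h.1.2.2 h.2 hu hv

theorem DipathIn.reachIn_of_mem {l : List V} (h : DipathIn A S l) (hu : l.head? = some u)
    (hv : l.getLast? = some v) (hw : w ∈ l) : ReachIn A S u w ∧ ReachIn A S w v := by
  obtain ⟨p, q, rfl⟩ := List.append_of_mem hw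
  have hprefix : p ++ [w] <+: p ++ w :: q := ⟨q, by simp⟩
  constructor
  · refine reachIn_of_isChain (h.1.2.2.prefix hprefix) (fun x hx => h.2 x ?_) ?_ (by simp)
    · simp only [List.mem_append, List.mem_cons] at hx ⊢; tauto
    · cases p <;> simpa using hu
  · refine reachIn_of_isChain (h.1.2.2.suffix ⟨p, rfl⟩) (fun x hx => h.2 x ?_) (by simp) ?_
    · simp only [List.mem_append, List.mem_cons] at hx ⊢; tauto
    · simpa [List.getLast?_eq_some_getLast] using hv

theorem ReachIn.exists_dipathIn (hu : u ∈ S) (h : ReachIn A S u v) :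
    ∃ l, DipathIn A S l ∧ l.head? = some u ∧ l.getLast? = some v := by
  induction h using Relation.ReflTransGen.head_induction_on with
  | refl =>
    exact ⟨[v], ⟨⟨by simp, by simp, List.isChain_singleton _⟩, by simpa using hu⟩, rfl, rfl⟩
  | @head a b hab _ ih =>
    obtain ⟨hab, haS, hbS⟩ := hab
    obtain ⟨l, ⟨⟨-, hnd, hch⟩, hlS⟩, hb, hv⟩ := ih hbS
    by_cases hal : a ∈ l
    · -- prepending `a` would repeat a vertex, so cut the path at `a` instead
      obtain ⟨p, q, rfl⟩ := List.append_of_mem hal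
      refine ⟨a :: q, ⟨⟨by simp, hnd.sublist (List.sublist_append_right p _),
        hch.suffix ⟨p, rfl⟩⟩, fun x hx => hlS x (List.mem_append_right p hx)⟩, rfl, ?_⟩
      simpa [List.getLast?_eq_some_getLast] using hv
    · cases l with
      | nil => simp at hb
      | cons c t =>
        obtain rfl : c = b := by simpa using hb
        refine ⟨a :: c :: t, ⟨⟨by simp, List.nodup_cons.2 ⟨hal, hnd⟩,
          List.isChain_cons_cons.2 ⟨hab, hch⟩⟩, ?_⟩, rfl, by simpa using hv⟩
        rintro x (_ | ⟨_, hx⟩)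
        exacts [haS, hlS x hx]

theorem StrongOn.mono_adj {A' : V → V → Prop} (hA : ∀ u v, A' u v → A u v)
    (h : StrongOn A' S) : StrongOn A S := fun u hu v hv =>
  let ⟨l, hl, hlu, hlv⟩ := h u hu v hv
  ⟨l, ⟨⟨hl.1.1, hl.1.2.1, hl.1.2.2.imp hA⟩, hl.2⟩, hlu, hlv⟩

theorem StrongOn.reachIn (h : StrongOn A S) (hSW : S ⊆ W) (hu : u ∈ S) (hv : v ∈ S) :
    ReachIn A W u v :=
  let ⟨_, hl, hlu, hlv⟩ := h u hu v hv
  (hl.reachIn hlu hlv).mono hSW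

theorem reachIn_of_strongOn_of_inter_nonempty {T T' : Set V} (hT : StrongOn A T)
    (hT' : StrongOn A T') (hmeet : (T ∩ T').Nonempty) (hTW : T ⊆ W) (hT'W : T' ⊆ W)
    (hu : u ∈ T) (hv : v ∈ T') : ReachIn A W u v :=
  let ⟨_, hxT, hxT'⟩ := hmeet
  (hT.reachIn hTW hu hxT).trans (hT'.reachIn hT'W hxT' hv)

end Reachability

section StrongComponent

variable {V : Type*} {A : V → V → Prop} {W W' : Set V} {v w : V}

def strongComponentOf (A : V → V → Prop) (W : Set V) (v : V) : Set V :=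
  {u | u ∈ W ∧ ReachIn A W v u ∧ ReachIn A W u v}

theorem strongComponentOf_mono (hWW' : W ⊆ W') :
    strongComponentOf A W v ⊆ strongComponentOf A W' v :=
  fun _ ⟨huW, hvu, huv⟩ => ⟨hWW' huW, hvu.mono hWW', huv.mono hWW'⟩

theorem strongComponentOf_eq (hvw : ReachIn A W v w) (hwv : ReachIn A W w v) :
    strongComponentOf A W v = strongComponentOf A W w :=
  Set.ext fun _ => ⟨fun ⟨huW, hvu, huv⟩ => ⟨huW, hwv.trans hvu, huv.trans hvw⟩,
    fun ⟨huW, hwu, huw⟩ => ⟨huW, hvw.trans hwu, huw.trans hwv⟩⟩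

theorem isStrongComponent_strongComponentOf (hv : v ∈ W) :
    IsStrongComponent A W (strongComponentOf A W v) := by
  refine ⟨fun u hu => hu.1, ⟨v, hv, .refl, .refl⟩, ?strong, ?maximal⟩
  case strong =>
    rintro u₁ ⟨hu₁W, hvu₁, hu₁v⟩ u₂ ⟨-, hvu₂, hu₂v⟩
    obtain ⟨l, hl, hlu₁, hlu₂⟩ := ReachIn.exists_dipathIn hu₁W (hu₁v.trans hvu₂)
    refine ⟨l, ⟨hl.1, fun x hx => ?_⟩, hlu₁, hlu₂⟩
    obtain ⟨hu₁x, hxu₂⟩ := hl.reachIn_of_mem hlu₁ hlu₂ hx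
    exact ⟨hl.2 x hx, hvu₁.trans hu₁x, hxu₂.trans hu₂v⟩
  case maximal =>
    intro C hC hCW hCstrong
    refine (Set.Subset.antisymm hC fun u hu => ?_).symm
    have hvC : v ∈ C := hC ⟨hv, .refl, .refl⟩
    exact ⟨hCW hu, hCstrong.reachIn hCW hvC hu, hCstrong.reachIn hCW hu hvC⟩

end StrongComponent

theorem hasHavenOn_of_forall_exists_disjoint {V ι : Type*} {A : V → V → Prop} {S : Set V}
    {w : ℕ} (T : ι → Set V) (hT : ∀ i, StrongOn A (T i)) (hTS : ∀ i, T i ⊆ S)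
    (hmeet : ∀ i j, (T i ∩ T j).Nonempty)
    (havoid : ∀ Z : Finset V, ↑Z ⊆ S → Z.card < w → ∃ i, Disjoint (Z : Set V) (T i)) :
    HasHavenOn A S w := by
  let Good (Z : Finset V) (v : V) : Prop := ∃ i, Disjoint (Z : Set V) (T i) ∧ v ∈ T i
  have good_reach {Z : Finset V} {v v' : V} : Good Z v → Good Z v' → ReachIn A (S \ Z) v v' :=
    fun ⟨i, hi, hv⟩ ⟨j, hj, hv'⟩ => reachIn_of_strongOn_of_inter_nonempty (hT i) (hT j)
      (hmeet i j) (Set.subset_sdiff.2 ⟨hTS i, hi.symm⟩) (Set.subset_sdiff.2 ⟨hTS j, hj.symm⟩)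
      hv hv'
  let B (Z : Finset V) : Set V := {u | ∃ v, Good Z v ∧ u ∈ strongComponentOf A (S \ Z) v}
  have hB {Z : Finset V} {v : V} (hv : Good Z v) : B Z = strongComponentOf A (S \ Z) v :=
    Set.ext fun _ => ⟨fun ⟨_, hv', hu⟩ => strongComponentOf_eq (good_reach hv hv')
      (good_reach hv' hv) ▸ hu, fun hu => ⟨v, hv, hu⟩⟩
  refine ⟨B, fun Z hZS hZ => ?_⟩
  obtain ⟨i, hi⟩ := havoid Z hZS hZ
  obtain ⟨v, hv, -⟩ := hmeet i i
  rw [hB ⟨i, hi, hv⟩]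
  refine ⟨isStrongComponent_strongComponentOf (Set.subset_sdiff.2 ⟨hTS i, hi.symm⟩ hv),
    fun Z' hZ' => ?_⟩
  rw [hB ⟨i, hi.mono_left (by exact_mod_cast hZ'), hv⟩]
  exact strongComponentOf_mono (Set.sdiff_subset_sdiff_right (by exact_mod_cast hZ'))

theorem exists_disjoint_of_mul_card_lt {V ι : Type*} [Finite ι] (T : ι → Set V) {k : ℕ}
    (hk : ∀ v, {i | v ∈ T i}.ncard ≤ k) (Z : Finset V) (hZ : k * Z.card < Nat.card ι) :
    ∃ i, Disjoint (Z : Set V) (T i) := by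
  by_contra! h
  have hcover : (Set.univ : Set ι) ⊆ ⋃ z ∈ Z, {i | z ∈ T i} := fun i _ =>
    let ⟨z, hzZ, hzT⟩ := Set.not_disjoint_iff.1 (h i)
    Set.mem_biUnion hzZ hzT
  have : Nat.card ι ≤ k * Z.card :=
    calc Nat.card ι = (Set.univ : Set ι).ncard := (Set.ncard_univ ι).symm
      _ ≤ (⋃ z ∈ Z, {i | z ∈ T i}).ncard := Set.ncard_le_ncard hcover
      _ ≤ ∑ z ∈ Z, {i | z ∈ T i}.ncard := Z.set_ncard_biUnion_le _
      _ ≤ ∑ _z ∈ Z, k := Finset.sum_le_sum fun z _ => hk z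
      _ = k * Z.card := by rw [Finset.sum_const, smul_eq_mul, mul_comm]
  omega

theorem union_of_pairwise_meeting_strong_subdigraphs_haven_general
    {V : Type} (n m : ℕ)
    (hm : 2 * n + 1 ≤ m) (A : V → V → Prop)
    (hS : Fin m → Set V) (hA : Fin m → V → V → Prop)
    (hsub : ∀ i, IsSubdigraph A (hS i) (hA i))
    (hstrong : ∀ i, StrongOn (hA i) (hS i))
    (hshare : ∀ i j, (hS i ∩ hS j).Nonempty)
    (htwo : ∀ v : V, ({i : Fin m | v ∈ hS i}).ncard ≤ 2) :
    HasHaven A (n + 1) :=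
  hasHavenOn_of_forall_exists_disjoint hS
    (fun i => (hstrong i).mono_adj fun u v huv => (hsub i u v huv).1)
    (fun i => Set.subset_univ _) hshare
    fun Z _ hZ => exists_disjoint_of_mul_card_lt hS htwo Z (by rw [Nat.card_fin]; omega)

/-- If a finite digraph `D'` is the union of `m ≥ 2n + 1` strongly
connected subdigraphs, any two of which share a vertex and such that every vertex of `D'`
lies in at most two of them, then `D'` has a haven of order `n + 1`. -/
theorem union_of_pairwise_meeting_strong_subdigraphs_haven
    {V : Type} [Fintype V] [DecidableEq V] (n m : ℕ) (hn : 0 < n)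
    (hm : 2 * n + 1 ≤ m) (A : V → V → Prop)
    (hS : Fin m → Set V) (hA : Fin m → V → V → Prop)
    (hsub : ∀ i, IsSubdigraph A (hS i) (hA i))
    (hstrong : ∀ i, StrongOn (hA i) (hS i))
    (hcoverV : ∀ v : V, ∃ i, v ∈ hS i)
    (hcoverE : ∀ u v, A u v → ∃ i, hA i u v)
    (hshare : ∀ i j, (hS i ∩ hS j).Nonempty)
    (htwo : ∀ v : V, ({i : Fin m | v ∈ hS i}).ncard ≤ 2) :
    HasHaven A (n + 1) :=
  union_of_pairwise_meeting_strong_subdigraphs_haven_general n m hm A hS hA hsub hstrong hshare htwo
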